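/- Assume Q is strictly increasing. Then the function c is strictly increasing on the interval (A·s₋, A·s₊) (with A·s₊ := ∞ if s₊ = ∞), and if s₋ > 0 then c(A·s₋) < 0. Consequently the minimum and maximum of {λ : c(λ) = 0} coincide. -/

import Mathlib

open Set Filter Topology

lemma aux_div_lt {A l : ℝ} (hA : 0 < A) {sHi : EReal} (h : (l:EReal) < (A:EReal)*sHi) :
    ((l/A : ℝ) : EReal) < sHi := by
  induction sHi using EReal.rec with
  | bot =>
      rw [EReal.mul_bot_of_pos (by exact_mod_cast hA : (0:EReal) < (A:EReal))] at h
      exact absurd h (by simp)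
  | coe s =>
      rw [← EReal.coe_mul] at h
      exact_mod_cast (div_lt_iff₀ hA).2 (by rw [mul_comm]; exact_mod_cast h)
  | top => exact EReal.coe_lt_top _

lemma aux_exists_between {x : ℝ} {sHi : EReal} (h : (x:EReal) < sHi) :
    ∃ s : ℝ, x < s ∧ ((s:ℝ):EReal) < sHi := by
  induction sHi using EReal.rec with
  | bot => exact absurd h (by simp)
  | coe y =>
      have : x < y := EReal.coe_lt_coe_iff.1 h
      exact ⟨(x+y)/2, by linarith, by exact_mod_cast (by linarith : (x+y)/2 < y)⟩
  | top => exact ⟨x+1, by linarith, EReal.coe_lt_top _⟩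

lemma aux_sh {sLo : ℝ} {sHi : EReal} (hs : (sLo:EReal) < sHi) {Q : ℝ → ℝ}
    (hQ_top : Tendsto Q (comap (fun s:ℝ => (s:EReal)) (𝓝[<] sHi)) atTop) (M : ℝ) :
    ∃ sh : ℝ, sLo < sh ∧ ((sh:ℝ):EReal) < sHi ∧ ∀ s : ℝ, sh ≤ s → ((s:ℝ):EReal) < sHi → M ≤ Q s := by
  have hev : ∀ᶠ b in 𝓝[<] sHi, ∀ s : ℝ, ((s:ℝ):EReal) = b → M ≤ Q s := by
    rw [← eventually_comap]
    exact hQ_top.eventually (eventually_ge_atTop M)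
  obtain ⟨b, hb, hIoo⟩ := (mem_nhdsLT_iff_exists_Ioo_subset' hs).mp hev
  have hb'lt : max b ((sLo:ℝ):EReal) < sHi := max_lt hb hs
  obtain ⟨x, hx1, hx2⟩ := exists_between hb'lt
  have hxbot : x ≠ ⊥ := by
    intro h; rw [h] at hx1
    exact absurd (lt_of_le_of_lt (le_max_right _ _) hx1) (by simp)
  have hxtop : x ≠ ⊤ := (hx2.trans_le le_top).ne
  refine ⟨x.toReal, ?_, ?_, ?_⟩
  · have : ((sLo:ℝ):EReal) < (x.toReal : EReal) := by
      rw [EReal.coe_toReal hxtop hxbot]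
      exact lt_of_le_of_lt (le_max_right _ _) hx1
    exact_mod_cast this
  · rw [EReal.coe_toReal hxtop hxbot]; exact hx2
  · intro s hle hlt
    have hmem : ((s:ℝ):EReal) ∈ Ioo b sHi := by
      constructor
      · calc b ≤ max b ((sLo:ℝ):EReal) := le_max_left _ _
          _ < x := hx1
          _ = ((x.toReal:ℝ):EReal) := (EReal.coe_toReal hxtop hxbot).symm
          _ ≤ ((s:ℝ):EReal) := by exact_mod_cast hle
      · exact hlt
    exact hIoo hmem s rfl

lemma aux_pick {sLo : ℝ} {sHi : EReal} (hs : (sLo:EReal) < sHi) {Q : ℝ → ℝ}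
    (hQ_zero : Tendsto Q (𝓝[>] sLo) (𝓝 0)) {ε : ℝ} (hε : 0 < ε) :
    ∃ s : ℝ, sLo < s ∧ ((s:ℝ):EReal) < sHi ∧ Q s < ε := by
  have h1 : ∀ᶠ s in 𝓝[>] sLo, Q s < ε := hQ_zero.eventually_lt_const hε
  have hop : IsOpen {s : ℝ | ((s:ℝ):EReal) < sHi} :=
    isOpen_Iio.preimage continuous_coe_real_ereal
  have h2 : ∀ᶠ s in 𝓝[>] sLo, ((s:ℝ):EReal) < sHi :=
    mem_nhdsWithin_of_mem_nhds (hop.mem_nhds hs)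
  have h3 : ∀ᶠ s in 𝓝[>] sLo, sLo < s := self_mem_nhdsWithin
  obtain ⟨s, h1, h2, h3⟩ := (h3.and (h2.and h1)).exists
  exact ⟨s, h1, h2, h3⟩

theorem stmt12 (t' t'' A sLo : ℝ) (sHi : EReal) (a Q : ℝ → ℝ)
    (ht' : 0 ≤ t') (ht : t' < t'')
    (ha_cont : ContinuousOn a (Icc t' t''))
    (ha_t' : a t' = 0) (ha_t'' : a t'' = 0)
    (ha_pos : ∀ α ∈ Ioo t' t'', 0 < a α)
    (hA : IsGreatest (a '' Icc t' t'') A)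
    (hsLo : 0 ≤ sLo) (hs : (sLo : EReal) < sHi)
    (hQ_cont : ContinuousOn Q {s : ℝ | sLo < s ∧ (s : EReal) < sHi})
    (hQ_pos : ∀ s : ℝ, sLo < s → (s : EReal) < sHi → 0 < Q s)
    (hQ_zero : Tendsto Q (𝓝[>] sLo) (𝓝 0))
    (hQ_top : Tendsto Q (comap (fun s : ℝ => (s : EReal)) (𝓝[<] sHi)) atTop)
    (hQ_mono : StrictMonoOn Q {s : ℝ | sLo < s ∧ (s : EReal) < sHi})
    (D Dt : ℝ → Set ℝ) (Pt : ℝ → ℝ → ℝ) (c : ℝ → ℝ)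
    (hD : ∀ l : ℝ, D l =
      {α : ℝ | α ∈ Ioo t' t'' ∧ sLo < l / a α ∧ ((l / a α : ℝ) : EReal) < sHi})
    (hDt : ∀ l : ℝ, Dt l = D l ∪ {α ∈ closure (D l) | sLo ≠ 0 ∧ a α = l / sLo})
    (hPt : ∀ l α : ℝ, Pt l α = if sLo ≠ 0 ∧ a α = l / sLo then 0 else Q (l / a α))
    (hc : ∀ l : ℝ, c l = sInf ((fun α => Pt l α - α) '' Dt l)) :
    StrictMonoOn c {l : ℝ | A * sLo < l ∧ (l : EReal) < (A : EReal) * sHi} ∧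
    (0 < sLo → c (A * sLo) < 0) ∧
    (∀ l₀ l₁ : ℝ,
      IsLeast {l : ℝ | 0 < l ∧ (l : EReal) < (A : EReal) * sHi ∧ c l = 0} l₀ →
      IsGreatest {l : ℝ | 0 < l ∧ (l : EReal) < (A : EReal) * sHi ∧ c l = 0} l₁ →
      l₀ = l₁) := by
  -- basic facts about A and the argmax point
  obtain ⟨α₀, hα₀Icc, hα₀⟩ := hA.1
  have haub : ∀ α ∈ Icc t' t'', a α ≤ A := fun α hα => hA.2 ⟨α, hα, rfl⟩
  have hmidIoo : (t'+t'')/2 ∈ Ioo t' t'' := ⟨by linarith, by linarith⟩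
  have hApos : 0 < A :=
    lt_of_lt_of_le (ha_pos _ hmidIoo) (haub _ (Ioo_subset_Icc_self hmidIoo))
  have hα₀Ioo : α₀ ∈ Ioo t' t'' := by
    constructor
    · rcases eq_or_lt_of_le hα₀Icc.1 with h | h
      · exact absurd (h ▸ hα₀) (by rw [ha_t']; exact hApos.ne)
      · exact h
    · rcases eq_or_lt_of_le hα₀Icc.2 with h | h
      · exact absurd (h ▸ hα₀) (by rw [ha_t'']; exact hApos.ne)
      · exact h
  -- D l ⊆ Ioo and Dt l ⊆ Icc
  have hDsub : ∀ l : ℝ, D l ⊆ Ioo t' t'' := by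
    intro l α hα; rw [hD] at hα; exact hα.1
  have hDtIcc : ∀ l : ℝ, ∀ α ∈ Dt l, α ∈ Icc t' t'' := by
    intro l α hα
    rw [hDt] at hα
    rcases hα with hα | hα
    · exact Ioo_subset_Icc_self (hDsub l hα)
    · exact closure_minimal ((hDsub l).trans Ioo_subset_Icc_self) isClosed_Icc hα.1
  -- Pt nonneg on Dt
  have hPtnn : ∀ l : ℝ, ∀ α ∈ Dt l, 0 ≤ Pt l α := by
    intro l α hα
    rw [hPt]
    split_ifs with h
    · exact le_rfl
    · rw [hDt] at hα
      rcases hα with hα | hα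
      · rw [hD] at hα
        exact (hQ_pos _ hα.2.1 hα.2.2).le
      · exact absurd hα.2 h
  -- bounded below
  have hbdd : ∀ l : ℝ, BddBelow ((fun α => Pt l α - α) '' Dt l) := by
    intro l
    refine ⟨-t'', ?_⟩
    rintro x ⟨α, hα, rfl⟩
    have h1 := hPtnn l α hα
    have h2 := (hDtIcc l α hα).2
    simp only
    linarith
  have hmemc : ∀ l α : ℝ, α ∈ Dt l → c l ≤ Pt l α - α := by
    intro l α hα
    rw [hc]
    exact csInf_le (hbdd l) ⟨α, hα, rfl⟩
  -- builder: from a α = l / s produce membership in D l together with Pt value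
  have hbuild : ∀ l s α : ℝ, 0 < l → sLo < s → ((s:ℝ):EReal) < sHi →
      α ∈ Icc t' t'' → a α = l / s → α ∈ D l ∧ Pt l α = Q s := by
    intro l s α hl hls hshi hIcc heq
    have hspos : 0 < s := hsLo.trans_lt hls
    have hapos : 0 < a α := by rw [heq]; positivity
    have hαIoo : α ∈ Ioo t' t'' := by
      constructor
      · rcases eq_or_lt_of_le hIcc.1 with h | h
        · exact absurd (h ▸ hapos) (by rw [ha_t']; exact lt_irrefl 0)
        · exact h
      · rcases eq_or_lt_of_le hIcc.2 with h | h
        · exact absurd (h ▸ hapos) (by rw [ha_t'']; exact lt_irrefl 0)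
        · exact h
    have hdiv : l / a α = s := by
      rw [heq]
      field_simp
    constructor
    · rw [hD]
      exact ⟨hαIoo, by rw [hdiv]; exact hls, by rw [hdiv]; exact hshi⟩
    · rw [hPt, if_neg, hdiv]
      rintro ⟨h0, he⟩
      have hsLopos : 0 < sLo := lt_of_le_of_ne hsLo (Ne.symm h0)
      rw [he] at hdiv
      have : l / (l / sLo) = sLo := by field_simp
      rw [this] at hdiv
      exact absurd hdiv.symm hls.ne'
  -- nonemptiness of Dt l for l in the range
  have hne : ∀ l : ℝ, A * sLo < l → (l:EReal) < (A:EReal) * sHi → (Dt l).Nonempty := by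
    intro l h1 h2
    have hlpos : 0 < l := lt_of_le_of_lt (mul_nonneg hApos.le hsLo) h1
    have hdivHi : ((l/A : ℝ):EReal) < sHi := aux_div_lt hApos h2
    obtain ⟨s, hs1, hs2⟩ := aux_exists_between hdivHi
    have hsLo_lt : sLo < s := lt_of_le_of_lt (by
      rw [le_div_iff₀ hApos, mul_comm]; exact h1.le) hs1
    have hspos : 0 < s := hsLo.trans_lt hsLo_lt
    have hlsA : l / s ≤ A := by
      rw [div_le_iff₀ hspos]
      calc l = (l / A) * A := by field_simp
        _ ≤ s * A := by have := hs1.le; gcongr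
        _ = A * s := mul_comm _ _
    obtain ⟨α, hαmem, heq⟩ := intermediate_value_Icc hα₀Ioo.1.le
      (ha_cont.mono (Icc_subset_Icc le_rfl hα₀Icc.2))
      (show l/s ∈ Icc (a t') (a α₀) by
        rw [ha_t', hα₀]; exact ⟨by positivity, hlsA⟩)
    have hαIcc : α ∈ Icc t' t'' := ⟨hαmem.1, hαmem.2.trans hα₀Icc.2⟩
    refine ⟨α, ?_⟩
    rw [hDt]
    exact Or.inl (hbuild l s α hlpos hsLo_lt hs2 hαIcc heq).1
  -- negativity for l ≤ A * sLo
  have hcneg : ∀ l : ℝ, 0 < l → l ≤ A * sLo → c l < 0 := by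
    intro l hl hle
    have hsLopos : 0 < sLo := by
      rcases hsLo.lt_or_eq with h | h
      · exact h
      · rw [← h, mul_zero] at hle; linarith
    have hα₀pos : 0 < α₀ := lt_of_le_of_lt ht' hα₀Ioo.1
    obtain ⟨s, hs1, hs2, hs3⟩ := aux_pick hs hQ_zero hα₀pos
    have hspos : 0 < s := hsLopos.trans hs1
    have hlsA : l / s ≤ A := by
      have h1 : l / sLo ≤ A := by rw [div_le_iff₀ hsLopos]; linarith [hle]
      have h2 : l / s < l / sLo := div_lt_div_of_pos_left hl hsLopos hs1
      linarith
    obtain ⟨α, hαmem, heq⟩ := intermediate_value_Icc' hα₀Ioo.2.le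
      (ha_cont.mono (Icc_subset_Icc hα₀Icc.1 le_rfl))
      (show l/s ∈ Icc (a t'') (a α₀) by
        rw [ha_t'', hα₀]; exact ⟨by positivity, hlsA⟩)
    have hαIcc : α ∈ Icc t' t'' := ⟨hα₀Icc.1.trans hαmem.1, hαmem.2⟩
    obtain ⟨hDm, hPtm⟩ := hbuild l s α hl hs1 hs2 hαIcc heq
    have hcle : c l ≤ Pt l α - α := hmemc l α (by rw [hDt]; exact Or.inl hDm)
    have : Pt l α - α < 0 := by
      rw [hPtm]
      have : α₀ ≤ α := hαmem.1
      linarith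
    linarith
  -- the main monotonicity statement
  have hmono : ∀ l₁ ∈ {l : ℝ | A * sLo < l ∧ (l : EReal) < (A : EReal) * sHi},
      ∀ l₂ ∈ {l : ℝ | A * sLo < l ∧ (l : EReal) < (A : EReal) * sHi},
      l₁ < l₂ → c l₁ < c l₂ := by
    intro l₁ hl₁ l₂ hl₂ hlt
    obtain ⟨hl₁a, hl₁b⟩ := hl₁
    obtain ⟨hl₂a, hl₂b⟩ := hl₂
    have hl₁pos : 0 < l₁ := lt_of_le_of_lt (mul_nonneg hApos.le hsLo) hl₁a
    have hl₂pos : 0 < l₂ := hl₁pos.trans hlt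
    have hu₀Lo : sLo < l₂ / A := by rw [lt_div_iff₀ hApos, mul_comm]; exact hl₂a
    have hv₀Lo : sLo < l₁ / A := by rw [lt_div_iff₀ hApos, mul_comm]; exact hl₁a
    have hu₀Hi : ((l₂/A : ℝ):EReal) < sHi := aux_div_lt hApos hl₂b
    obtain ⟨sh₀, hsh₀Lo, hsh₀Hi, hsh₀⟩ := aux_sh hs hQ_top (c l₁ + 1 + t'')
    set sh := max sh₀ (l₂/A) with hsh_def
    have hshHi : ((sh:ℝ):EReal) < sHi := by
      rcases max_choice sh₀ (l₂/A) with h | h <;> rw [hsh_def, h]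
      · exact hsh₀Hi
      · exact hu₀Hi
    have hshQ : ∀ s : ℝ, sh ≤ s → ((s:ℝ):EReal) < sHi → c l₁ + 1 + t'' ≤ Q s :=
      fun s h1 h2 => hsh₀ s ((le_max_left _ _).trans h1) h2
    have hu₀sh : l₂/A ≤ sh := le_max_right _ _
    -- properties of the compact window
    have hIsub : ∀ u ∈ Icc (l₂/A) sh,
        (sLo < u ∧ ((u:ℝ):EReal) < sHi) ∧
        (sLo < l₁/l₂ * u ∧ ((l₁/l₂ * u : ℝ):EReal) < sHi) ∧ l₁/l₂ * u < u := by
      rintro u ⟨h1, h2⟩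
      have h3 : sLo < u := hu₀Lo.trans_le h1
      have hu_pos : 0 < u := lt_of_le_of_lt hsLo h3
      have h4 : ((u:ℝ):EReal) < sHi :=
        lt_of_le_of_lt (by exact_mod_cast h2) hshHi
      have hr1 : l₁/l₂ * u < u := by
        have hr : l₁/l₂ < 1 := (div_lt_one hl₂pos).2 hlt
        nlinarith
      have hkey : l₁/l₂ * (l₂/A) = l₁/A := by field_simp
      have hr2 : sLo < l₁/l₂ * u := by
        have : l₁/l₂ * (l₂/A) ≤ l₁/l₂ * u := by
          have hnn : 0 ≤ l₁/l₂ := by positivity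
          exact mul_le_mul_of_nonneg_left h1 hnn
        rw [hkey] at this
        exact lt_of_lt_of_le hv₀Lo this
      have hr3 : ((l₁/l₂ * u : ℝ):EReal) < sHi :=
        lt_of_le_of_lt (by exact_mod_cast hr1.le) h4
      exact ⟨⟨h3, h4⟩, ⟨hr2, hr3⟩, hr1⟩
    -- the minimum gap on the compact window
    have hgcont : ContinuousOn (fun u => Q u - Q (l₁/l₂ * u)) (Icc (l₂/A) sh) := by
      apply ContinuousOn.sub
      · exact hQ_cont.mono (fun u hu => (hIsub u hu).1)
      · exact hQ_cont.comp ((continuous_const.mul continuous_id).continuousOn)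
          (fun u hu => (hIsub u hu).2.1)
    obtain ⟨us, husI, husmin⟩ := isCompact_Icc.exists_isMinOn
      ⟨l₂/A, le_refl _, hu₀sh⟩ hgcont
    set mg := Q us - Q (l₁/l₂ * us) with hmg_def
    have hmgpos : 0 < mg := by
      obtain ⟨hd1, hd2, hd3⟩ := hIsub us husI
      exact sub_pos.2 (hQ_mono hd2 hd1 hd3)
    -- boundary estimate
    obtain ⟨δb, hδbpos, hδb⟩ : ∃ δb : ℝ, 0 < δb ∧ ∀ α : ℝ, α ∈ closure (D l₂) →
        sLo ≠ 0 → a α = l₂ / sLo → ∃ α', α' ∈ Dt l₁ ∧ Pt l₁ α' - α' ≤ -α - δb := by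
      by_cases h0 : sLo = 0
      · exact ⟨1, one_pos, fun α _ hne' _ => absurd h0 hne'⟩
      · have hsLopos : 0 < sLo := lt_of_le_of_ne hsLo (Ne.symm h0)
        have hll : l₁ / sLo < l₂ / sLo := by gcongr
        have hεb : 0 < (l₂/sLo - l₁/sLo)/2 := by linarith
        have huc := (isCompact_Icc.uniformContinuousOn_of_continuous ha_cont)
        rw [Metric.uniformContinuousOn_iff] at huc
        obtain ⟨η, hηpos, hη⟩ := huc _ hεb
        obtain ⟨sb, hsb1, hsb2, hsb3⟩ := aux_pick hs hQ_zero (half_pos hηpos)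
        refine ⟨η/2, half_pos hηpos, ?_⟩
        intro α hαcl hne' heq
        have hαIcc : α ∈ Icc t' t'' :=
          closure_minimal ((hDsub l₂).trans Ioo_subset_Icc_self) isClosed_Icc hαcl
        have hsbpos : 0 < sb := hsLopos.trans hsb1
        have h2 : l₁/sb < l₁/sLo := div_lt_div_of_pos_left hl₁pos hsLopos hsb1
        have h1 : l₁ / sb ≤ a α := by rw [heq]; linarith
        obtain ⟨α', hα'mem, heq'⟩ := intermediate_value_Icc' hαIcc.2
          (ha_cont.mono (Icc_subset_Icc hαIcc.1 le_rfl))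
          (show l₁/sb ∈ Icc (a t'') (a α) by
            rw [ha_t'']; exact ⟨by positivity, h1⟩)
        have hα'Icc : α' ∈ Icc t' t'' := ⟨hαIcc.1.trans hα'mem.1, hα'mem.2⟩
        obtain ⟨hDm, hPtm⟩ := hbuild l₁ sb α' hl₁pos hsb1 hsb2 hα'Icc heq'
        have hgap : η ≤ α' - α := by
          by_contra hcon
          push_neg at hcon
          have hdist : dist α' α < η := by
            rw [Real.dist_eq, abs_of_nonneg (by linarith [hα'mem.1])]
            linarith
          have hd := hη α' hα'Icc α hαIcc hdist
          rw [Real.dist_eq, heq', heq] at hd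
          rw [abs_sub_comm, abs_of_nonneg (by linarith)] at hd
          linarith
        refine ⟨α', by rw [hDt]; exact Or.inl hDm, ?_⟩
        rw [hPtm]
        linarith
    set δ := min 1 (min mg δb) with hδ_def
    have hδpos : 0 < δ := lt_min one_pos (lt_min hmgpos hδbpos)
    have hδ1 : δ ≤ 1 := min_le_left _ _
    have hδmg : δ ≤ mg := (min_le_right _ _).trans (min_le_left _ _)
    have hδb' : δ ≤ δb := (min_le_right _ _).trans (min_le_right _ _)
    -- key pointwise estimate
    have key : ∀ x ∈ (fun α => Pt l₂ α - α) '' Dt l₂, c l₁ + δ ≤ x := by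
      rintro x ⟨α, hα, rfl⟩
      simp only
      rw [hDt] at hα
      rcases hα with hα | ⟨hαcl, h0, heq⟩
      · -- interior case
        rw [hD] at hα
        obtain ⟨hαIoo, hαLo, hαHi⟩ := hα
        have hapos := ha_pos α hαIoo
        have hPt2 : Pt l₂ α = Q (l₂ / a α) := by
          rw [hPt, if_neg]
          rintro ⟨h0', heq'⟩
          have hsLopos : 0 < sLo := lt_of_le_of_ne hsLo (Ne.symm h0')
          rw [heq'] at hαLo
          rw [show l₂ / (l₂ / sLo) = sLo by field_simp] at hαLo
          exact lt_irrefl _ hαLo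
        have hu₀le : l₂ / A ≤ l₂ / a α := by
          have := haub α (Ioo_subset_Icc_self hαIoo)
          gcongr
        by_cases hcase : sh ≤ l₂ / a α
        · have hQbig := hshQ _ hcase hαHi
          have hαt'' : α ≤ t'' := hαIoo.2.le
          rw [hPt2]
          linarith
        · push_neg at hcase
          have huI : l₂ / a α ∈ Icc (l₂/A) sh := ⟨hu₀le, hcase.le⟩
          obtain ⟨⟨hd1, hd2⟩, ⟨hd3, hd4⟩, hd5⟩ := hIsub _ huI
          have hkey : l₁ / a α = l₁/l₂ * (l₂ / a α) := by field_simp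
          have hαD1 : α ∈ D l₁ := by
            rw [hD]
            exact ⟨hαIoo, by rw [hkey]; exact hd3, by rw [hkey]; exact_mod_cast hd4⟩
          have hPt1 : Pt l₁ α = Q (l₁/l₂ * (l₂ / a α)) := by
            rw [hPt, if_neg, hkey]
            rintro ⟨h0', heq'⟩
            have hsLopos : 0 < sLo := lt_of_le_of_ne hsLo (Ne.symm h0')
            have hs' : l₁ / a α = sLo := by
              rw [heq', show l₁ / (l₁ / sLo) = sLo by field_simp]
            rw [hkey] at hs'
            exact absurd hs' hd3.ne'
          have hmin : mg ≤ Q (l₂ / a α) - Q (l₁/l₂ * (l₂ / a α)) := (isMinOn_iff.mp husmin) _ huI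
          have hcle : c l₁ ≤ Pt l₁ α - α :=
            hmemc l₁ α (by rw [hDt]; exact Or.inl hαD1)
          rw [hPt1] at hcle
          rw [hPt2]
          have t1 : c l₁ + δ ≤ Q (l₁/l₂ * (l₂ / a α)) - α + mg := add_le_add hcle hδmg
          have t2 : Q (l₁/l₂ * (l₂ / a α)) - α + mg ≤ Q (l₂ / a α) - α := by linarith
          linarith
      · -- boundary case
        obtain ⟨α', hα'mem, hineq⟩ := hδb α hαcl h0 heq
        have hPt2 : Pt l₂ α = 0 := by rw [hPt, if_pos ⟨h0, heq⟩]
        have hc1 : c l₁ ≤ Pt l₁ α' - α' := hmemc l₁ α' hα'mem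
        rw [hPt2]
        linarith
    have hfinal : c l₁ + δ ≤ c l₂ := by
      rw [hc l₂]
      exact le_csInf ((hne l₂ hl₂a hl₂b).image _) key
    linarith
  refine ⟨hmono, ?_, ?_⟩
  · intro h
    exact hcneg (A * sLo) (mul_pos hApos h) le_rfl
  · intro l₀ l₁ h₀ h₁
    by_contra hne'
    have hlt : l₀ < l₁ := lt_of_le_of_ne (h₁.2 h₀.1) hne'
    rcases le_or_gt l₀ (A * sLo) with hle | hgt
    · exact absurd h₀.1.2.2 (ne_of_lt (hcneg l₀ h₀.1.1 hle))
    · have := hmono l₀ ⟨hgt, h₀.1.2.1⟩ l₁ ⟨hgt.trans hlt, h₁.1.2.1⟩ hlt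
      rw [h₀.1.2.2, h₁.1.2.2] at this
      exact lt_irrefl 0 this
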